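/- For every uncovered request r_i with suns(i)≠∅, the radius of the parent is at least twice the sum of the radii of its children: ρ(i) ≥ 2·Σ_{j∈suns(i)} ρ(j). -/

import Mathlib

open Finset

/-- A replica is a pair `(v, t)` of a network node and a time. -/
abbrev Replica : Type := ℕ × ℕ

/-- A (directed) grid edge is a pair of replicas. -/
abbrev GEdge : Type := Replica × Replica

/-- Horizontal directed edge `((v,t),(v+1,t))`. -/
def isHoriz (e : GEdge) : Prop := e.2 = (e.1.1 + 1, e.1.2)

/-- Vertical arc `((v,t),(v,t+1))`. -/
def isArc (e : GEdge) : Prop := e.2 = (e.1.1, e.1.2 + 1)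

def isGridEdge (e : GEdge) : Prop := isHoriz e ∨ isArc e

/-- The quarter ball `B(r,ρ)`: replicas `(u,s)` with `u ≤ v`, `s ≤ t` and
`(v−u)+(t−s) ≤ ρ`. -/
def qball (r : Replica) (ρ : ℕ) : Set Replica :=
  {q | q.1 ≤ r.1 ∧ q.2 ≤ r.2 ∧ (r.1 - q.1) + (r.2 - q.2) ≤ ρ}

/-- Grid edges with both endpoints in the quarter ball `B(r,ρ)`. -/
def ballEdge (r : Replica) (ρ : ℕ) (e : GEdge) : Prop :=
  isGridEdge e ∧ e.1 ∈ qball r ρ ∧ e.2 ∈ qball r ρ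

/-- Two quarter balls are edge-disjoint if they share no grid edge. -/
def BallsEdgeDisjoint (r : Replica) (ρ : ℕ) (r' : Replica) (ρ' : ℕ) : Prop :=
  ∀ e : GEdge, ¬ (ballEdge r ρ e ∧ ballEdge r' ρ' e)

/-- The square `Sq(r,ρ) = [v−ρ,v] × [t−ρ,t]`. -/
def SqRect (r : Replica) (ρ : ℕ) : Set Replica :=
  {q | r.1 - ρ ≤ q.1 ∧ q.1 ≤ r.1 ∧ r.2 - ρ ≤ q.2 ∧ q.2 ≤ r.2}

/-- Directed `L∞` distance `d∞(q,r)`: `max(v−u, t−s)` if `u ≤ v` and `s ≤ t`,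
and `∞` otherwise. -/
def distInf (q r : Replica) : ℕ∞ :=
  if q.1 ≤ r.1 ∧ q.2 ≤ r.2 then ((max (r.1 - q.1) (r.2 - q.2) : ℕ) : ℕ∞) else ⊤

/-- The replicas of an edge set: `(0,0)` together with all endpoints of its edges. -/
def Repl (F : Finset GEdge) : Set Replica :=
  insert ((0, 0) : Replica) {q | ∃ e ∈ F, q = e.1 ∨ q = e.2}

/-- The arcs of the vertical path at node `u` from time `s` to time `τ`. -/
def vertPath (u s τ : ℕ) : Finset GEdge :=
  (Finset.range (τ - s)).image (fun k => ((u, s + k), (u, s + k + 1)))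

/-- The horizontal edges of the path at time `τ` from node `u` to node `w`. -/
def horizPath (τ u w : ℕ) : Finset GEdge :=
  (Finset.range (w - u)).image (fun k => ((u + k, τ), (u + k + 1, τ)))

/-- A directed path from `a` to `b` all of whose edges belong to `F`. -/
def PathIn (F : Finset GEdge) (a b : Replica) : Prop :=
  ∃ (L : ℕ) (f : ℕ → Replica), f 0 = a ∧ f L = b ∧ ∀ k < L, (f k, f (k + 1)) ∈ F

/-- An execution of Algorithm `Square` on a request sequence
`r_1 = (v 1, t 1), …, r_N = (v N, t N)` (with `t 0 = 0` and nondecreasing times).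
`sol i` is the edge set after handling request `i`; `ρ i` is the radius of
request `i`; `(u' i, s' i)` is its closest replica and `(us i, ss i)` its
serving replica.  The fields record the specification SQ1–SQ5. -/
structure SquareRun where
  N : ℕ
  v : ℕ → ℕ
  t : ℕ → ℕ
  ρ : ℕ → ℕ
  u' : ℕ → ℕ
  s' : ℕ → ℕ
  us : ℕ → ℕ
  ss : ℕ → ℕ
  sol : ℕ → Finset GEdge
  t_zero : t 0 = 0
  t_mono : ∀ i j, i ≤ j → j ≤ N → t i ≤ t j
  sol_zero : sol 0 = ∅
  /-- SQ2: `ρ i` is a lower bound on the distance from every replica of the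
  current solution (after the SQ1 additions) to `r_i`. -/
  rho_min : ∀ i, 1 ≤ i → i ≤ N →
    ∀ q ∈ Repl (sol (i - 1) ∪ vertPath 0 (t (i - 1)) (t i)),
      (ρ i : ℕ∞) ≤ distInf q (v i, t i)
  /-- SQ2: the closest replica belongs to the current solution. -/
  closest_mem : ∀ i, 1 ≤ i → i ≤ N →
    (u' i, s' i) ∈ Repl (sol (i - 1) ∪ vertPath 0 (t (i - 1)) (t i))
  /-- SQ2: the closest replica attains the radius. -/
  closest_dist : ∀ i, 1 ≤ i → i ≤ N →
    distInf (u' i, s' i) (v i, t i) = (ρ i : ℕ∞)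
  /-- SQ2: among replicas of node `u' i`, the closest replica is the latest. -/
  closest_late : ∀ i, 1 ≤ i → i ≤ N → ∀ s, s ≤ t i →
    (u' i, s) ∈ Repl (sol (i - 1) ∪ vertPath 0 (t (i - 1)) (t i)) → s ≤ s' i
  /-- SQ3: the serving replica is in the current solution and in `Sq(r_i, 5ρ i)`. -/
  serv_mem : ∀ i, 1 ≤ i → i ≤ N →
    (us i, ss i) ∈ Repl (sol (i - 1) ∪ vertPath 0 (t (i - 1)) (t i)) ∧
      (us i, ss i) ∈ SqRect (v i, t i) (5 * ρ i)
  /-- SQ3: the serving node is leftmost. -/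
  serv_min : ∀ i, 1 ≤ i → i ≤ N →
    ∀ q ∈ Repl (sol (i - 1) ∪ vertPath 0 (t (i - 1)) (t i)),
      q ∈ SqRect (v i, t i) (5 * ρ i) → us i ≤ q.1
  /-- SQ3: among those, the serving time is latest. -/
  serv_late : ∀ i, 1 ≤ i → i ≤ N →
    ∀ q ∈ Repl (sol (i - 1) ∪ vertPath 0 (t (i - 1)) (t i)),
      q ∈ SqRect (v i, t i) (5 * ρ i) → q.1 = us i → q.2 ≤ ss i
  /-- SQ1 + SQ4 + SQ5: the edges added while handling request `i`. -/
  step : ∀ i, 1 ≤ i → i ≤ N →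
    sol i = (sol (i - 1) ∪ vertPath 0 (t (i - 1)) (t i))
      ∪ vertPath (us i) (ss i) (t i) ∪ horizPath (t i) (us i) (v i)
      ∪ vertPath (us i) (t i) (t i + 4 * ρ i)

namespace SquareRun

variable (S : SquareRun)

/-- The `i`-th request replica. -/
def req (i : ℕ) : Replica := (S.v i, S.t i)

/-- The edges added in steps SQ4 and SQ5 while handling request `i`. -/
def added45 (i : ℕ) : Finset GEdge :=
  vertPath (S.us i) (S.ss i) (S.t i) ∪ horizPath (S.t i) (S.us i) (S.v i)
    ∪ vertPath (S.us i) (S.t i) (S.t i + 4 * S.ρ i)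

/-- Request `i` is covered if `v_i − u^s_i ≥ ρ(i)`. -/
def covered (i : ℕ) : Prop := S.ρ i ≤ S.v i - S.us i

def uncovered (i : ℕ) : Prop := ¬ S.covered i

/-- A feasible solution of the DMCD instance given by the requests of `S`. -/
def Feasible (F : Finset GEdge) : Prop :=
  (∀ e ∈ F, isGridEdge e) ∧
  (∀ i, 1 ≤ i → i ≤ S.N → PathIn F (0, 0) (S.req i)) ∧
  (∀ τ, τ < S.t S.N → ∃ w, ((w, τ), (w, τ + 1)) ∈ F)

/-- `S.IsParent i j` means `parent(j) = i`:  `i` is the least index greater than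
`j` such that `r_i` is uncovered and `SQball(j)`, `SQball(i)` are not
edge-disjoint. -/
def IsParent (i j : ℕ) : Prop :=
  1 ≤ j ∧ j < i ∧ i ≤ S.N ∧ S.uncovered j ∧ S.uncovered i ∧
    ¬ BallsEdgeDisjoint (S.req j) (S.ρ j) (S.req i) (S.ρ i) ∧
    ∀ k, j < k → k < i → S.uncovered k →
      BallsEdgeDisjoint (S.req j) (S.ρ j) (S.req k) (S.ρ k)

/-- A root: an uncovered request with no parent. -/
def IsRoot (i : ℕ) : Prop :=
  1 ≤ i ∧ i ≤ S.N ∧ S.uncovered i ∧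
    ∀ j, i < j → j ≤ S.N → S.uncovered j →
      BallsEdgeDisjoint (S.req i) (S.ρ i) (S.req j) (S.ρ j)

/-- `i ∈ Tree(iStar)`: one can go from `i` to `iStar` by repeatedly passing from
a child to its parent. -/
def InTree (i iStar : ℕ) : Prop :=
  Relation.ReflTransGen (fun a b => S.IsParent b a) i iStar

end SquareRun

/-!
Every sun `j` of `i` is uncovered and its quarter ball meets that of `i`; hence the row and the
trail that Square adds for `j` lie right of `v i`, and the closest replica of `r_i`, created at
least `ρ(i)` before `t_i`, would lie in `Sq(r_j, 5ρ(j))` left of the serving node of `j` unless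
`4ρ(j) < ρ(i)`. For suns `k' < k`, the trail added for `k'` ends at least `ρ(k)` before `t_k`:
otherwise that trail comes within `ρ(k)` of `r_k`, or the quarter balls of `k'` and `k` meet
(against the choice of the parent of `k'`), or the serving replicas that produced the closest
replica of `r_k` lead back into `Sq(r_k', 5ρ(k'))` left of the serving node of `k'`. So the
intervals `[t_j, t_j + 4ρ(j)]` of the suns are disjoint and lie in
`[t_i + 1 − ρ(i), t_i + ρ(i) − 1]`.
-/

lemma Repl_mono {F G : Finset GEdge} (h : F ⊆ G) : Repl F ⊆ Repl G := by
  rintro q (rfl | ⟨e, he, hq⟩)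
  · exact Set.mem_insert _ _
  · exact Or.inr ⟨e, h he, hq⟩

lemma mem_Repl_of_vertPath_subset {F : Finset GEdge} {u s e τ : ℕ} (hF : vertPath u s e ⊆ F)
    (hs : ((u, s) : Replica) ∈ Repl F) (h1 : s ≤ τ) (h2 : τ ≤ e) :
    ((u, τ) : Replica) ∈ Repl F := by
  rcases h1.eq_or_lt with rfl | h
  · exact hs
  · refine Or.inr ⟨((u, τ - 1), (u, τ)), hF ?_, Or.inr rfl⟩
    refine Finset.mem_image.2 ⟨τ - 1 - s, Finset.mem_range.2 (by omega), ?_⟩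
    simp only [Prod.mk.injEq, true_and]
    omega

lemma mem_Repl_of_horizPath_subset {F : Finset GEdge} {τ u w x : ℕ} (hF : horizPath τ u w ⊆ F)
    (hu : ((u, τ) : Replica) ∈ Repl F) (h1 : u ≤ x) (h2 : x ≤ w) :
    ((x, τ) : Replica) ∈ Repl F := by
  rcases h1.eq_or_lt with rfl | h
  · exact hu
  · refine Or.inr ⟨((x - 1, τ), (x, τ)), hF ?_, Or.inr rfl⟩
    refine Finset.mem_image.2 ⟨x - 1 - u, Finset.mem_range.2 (by omega), ?_⟩
    simp only [Prod.mk.injEq, and_true]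
    omega

lemma endpoint_of_mem_vertPath {u s τ : ℕ} {e : GEdge} {q : Replica} (he : e ∈ vertPath u s τ)
    (hq : q = e.1 ∨ q = e.2) : q.1 = u ∧ s ≤ q.2 ∧ q.2 ≤ τ := by
  obtain ⟨k, hk, rfl⟩ := Finset.mem_image.1 he
  rw [Finset.mem_range] at hk
  rcases hq with rfl | rfl <;> exact ⟨rfl, by dsimp only; omega, by dsimp only; omega⟩

lemma endpoint_of_mem_horizPath {τ u w : ℕ} {e : GEdge} {q : Replica} (he : e ∈ horizPath τ u w)
    (hq : q = e.1 ∨ q = e.2) : q.2 = τ ∧ u ≤ q.1 ∧ q.1 ≤ w := by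
  obtain ⟨k, hk, rfl⟩ := Finset.mem_image.1 he
  rw [Finset.mem_range] at hk
  rcases hq with rfl | rfl <;> exact ⟨rfl, by dsimp only; omega, by dsimp only; omega⟩

lemma mem_Repl_of_mem_Repl_union_vertPath_zero {F : Finset GEdge} {s τ : ℕ} {q : Replica}
    (hq : q ∈ Repl (F ∪ vertPath 0 s τ)) (h : 1 ≤ q.1) : q ∈ Repl F := by
  rcases hq with rfl | ⟨e, he, hqe⟩
  · exact absurd h (by decide)
  rcases Finset.mem_union.1 he with he | he
  · exact Or.inr ⟨e, he, hqe⟩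
  · have := (endpoint_of_mem_vertPath he hqe).1
    omega

lemma not_ballsEdgeDisjoint_iff {r r' : Replica} {ρ ρ' : ℕ} :
    ¬ BallsEdgeDisjoint r ρ r' ρ' ↔ ∃ p : Replica, 1 ≤ p.1 + p.2 ∧
      p.1 ≤ r.1 ∧ p.2 ≤ r.2 ∧ p.1 ≤ r'.1 ∧ p.2 ≤ r'.2 ∧
      r.1 - p.1 + (r.2 - p.2) < ρ ∧ r'.1 - p.1 + (r'.2 - p.2) < ρ' := by
  simp only [BallsEdgeDisjoint, ballEdge, isGridEdge, isHoriz, isArc, qball, Set.mem_ofPred_eq,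
    not_forall, not_not]
  constructor
  · rintro ⟨e, ⟨hgrid, h1, h2⟩, -, h1', h2'⟩
    refine ⟨e.2, ?_⟩
    rcases hgrid with h | h <;> rw [h] at h2 h2' ⊢ <;> dsimp only at * <;> omega
  · rintro ⟨⟨x, y⟩, hxy, h⟩
    dsimp only at hxy h
    rcases Nat.eq_zero_or_pos x with rfl | hx
    · have hg : ((0, y) : Replica) = ((0, y - 1).1, (0, y - 1).2 + 1) :=
        Prod.ext rfl (by dsimp only; omega)
      exact ⟨((0, y - 1), (0, y)), ⟨Or.inr hg, by dsimp only; omega, by dsimp only; omega⟩,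
        Or.inr hg, by dsimp only; omega, by dsimp only; omega⟩
    · have hg : ((x, y) : Replica) = ((x - 1, y).1 + 1, (x - 1, y).2) :=
        Prod.ext (by dsimp only; omega) rfl
      exact ⟨((x - 1, y), (x, y)), ⟨Or.inl hg, by dsimp only; omega, by dsimp only; omega⟩,
        Or.inl hg, by dsimp only; omega, by dsimp only; omega⟩

theorem Finset.add_sum_le_of_chain {ι M : Type*} [LinearOrder ι] [AddCommMonoid M]
    [PartialOrder M] [IsOrderedAddMonoid M] (s : Finset ι) (t w : ι → M) {c d : M} (hs : s.Nonempty)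
    (hc : ∀ j ∈ s, c ≤ t j) (hd : ∀ j ∈ s, t j + w j ≤ d)
    (h : ∀ a ∈ s, ∀ b ∈ s, a < b → t a + w a ≤ t b) : c + ∑ j ∈ s, w j ≤ d := by
  induction s using Finset.induction_on_max generalizing d with
  | empty => exact absurd hs Finset.not_nonempty_empty
  | insert a s ha ih =>
    have has : a ∉ s := fun h => lt_irrefl a (ha a h)
    have hs_le : c + ∑ j ∈ s, w j ≤ t a := by
      rcases s.eq_empty_or_nonempty with rfl | hne
      · simpa using hc a (mem_insert_self a ∅)
      exact ih hne (fun j hj => hc j (mem_insert_of_mem hj))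
        (fun j hj => h j (mem_insert_of_mem hj) a (mem_insert_self a s) (ha j hj))
        (fun x hx y hy => h x (mem_insert_of_mem hx) y (mem_insert_of_mem hy))
    calc c + ∑ j ∈ insert a s, w j = c + ∑ j ∈ s, w j + w a := by
          rw [Finset.sum_insert has, add_comm (w a), add_assoc]
      _ ≤ t a + w a := by gcongr
      _ ≤ d := hd a (mem_insert_self a s)

namespace SquareRun

section

variable (S : SquareRun)

/-- The replicas of the current solution when request `n` is handled, i.e. after step SQ1. -/
def available (n : ℕ) : Set Replica :=
  Repl (S.sol (n - 1) ∪ vertPath 0 (S.t (n - 1)) (S.t n))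

/-- The replicas on the paths added in SQ4–SQ5 for request `m`: the row from the serving node to
`v m` at time `t m`, and the column `us m` from `ss m` up to `t m + 4 ρ m`. -/
def serviceReplicas (m : ℕ) : Set Replica :=
  {q | (q.2 = S.t m ∧ S.us m ≤ q.1 ∧ q.1 ≤ S.v m) ∨
    (q.1 = S.us m ∧ S.ss m ≤ q.2 ∧ q.2 ≤ S.t m + 4 * S.ρ m)}

lemma sol_mono {a b : ℕ} (hab : a ≤ b) (hb : b ≤ S.N) : S.sol a ⊆ S.sol b := by
  induction b, hab using Nat.le_induction with
  | base => exact subset_rfl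
  | succ b hab ih =>
    refine (ih (by omega)).trans fun e he => ?_
    rw [S.step (b + 1) (by omega) hb]
    simp only [Nat.add_sub_cancel, Finset.mem_union]
    tauto

lemma available_subset_Repl_sol {n : ℕ} (h1 : 1 ≤ n) (hN : n ≤ S.N) :
    S.available n ⊆ Repl (S.sol n) :=
  Repl_mono fun e he => by
    rw [S.step n h1 hN]
    simp only [Finset.mem_union] at he ⊢
    tauto

lemma Repl_sol_subset_available {m n : ℕ} (hmn : m < n) (hN : n ≤ S.N) :
    Repl (S.sol m) ⊆ S.available n :=
  Repl_mono ((S.sol_mono (by omega : m ≤ n - 1) (by omega)).trans Finset.subset_union_left)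

lemma serv_bounds {n : ℕ} (h1 : 1 ≤ n) (hN : n ≤ S.N) :
    S.v n ≤ S.us n + 5 * S.ρ n ∧ S.us n ≤ S.v n ∧ S.t n ≤ S.ss n + 5 * S.ρ n ∧ S.ss n ≤ S.t n := by
  obtain ⟨-, h₁, h₂, h₃, h₄⟩ := S.serv_mem n h1 hN
  exact ⟨by dsimp only at h₁; omega, h₂, by dsimp only at h₃; omega, h₄⟩

lemma serviceReplicas_subset {m : ℕ} (h1 : 1 ≤ m) (hN : m ≤ S.N) :
    S.serviceReplicas m ⊆ Repl (S.sol m) := by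
  obtain ⟨-, -, -, hst⟩ := S.serv_bounds h1 hN
  have hsub : ∀ F, F ⊆ S.added45 m → F ⊆ S.sol m := fun F hF e he => by
    have := hF he
    rw [S.step m h1 hN]
    simp only [added45, Finset.mem_union] at this ⊢
    tauto
  have hserv : ((S.us m, S.ss m) : Replica) ∈ Repl (S.sol m) :=
    S.available_subset_Repl_sol h1 hN (S.serv_mem m h1 hN).1
  have hlow := hsub _ (Finset.subset_union_left.trans Finset.subset_union_left)
  have hrow := hsub _ (Finset.subset_union_right.trans Finset.subset_union_left)
  have hhigh := hsub _ Finset.subset_union_right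
  have hturn := mem_Repl_of_vertPath_subset hlow hserv hst le_rfl
  have hcol : ∀ τ, S.ss m ≤ τ → τ ≤ S.t m + 4 * S.ρ m →
      ((S.us m, τ) : Replica) ∈ Repl (S.sol m) := fun τ h₁ h₂ => by
    rcases le_total τ (S.t m) with h | h
    · exact mem_Repl_of_vertPath_subset hlow hserv h₁ h
    · exact mem_Repl_of_vertPath_subset hhigh hturn h h₂
  rintro ⟨a, b⟩ (⟨rfl, h₁, h₂⟩ | ⟨rfl, h₁, h₂⟩)
  · exact mem_Repl_of_horizPath_subset hrow hturn h₁ h₂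
  · exact hcol b h₁ h₂

lemma mk_min_mem_serviceReplicas {m τ : ℕ} (h1 : 1 ≤ m) (hN : m ≤ S.N) {q : Replica}
    (hq : q ∈ S.serviceReplicas m) (hτ : S.t m ≤ τ) :
    ((q.1, min q.2 τ) : Replica) ∈ S.serviceReplicas m := by
  have := S.serv_bounds h1 hN
  rcases hq with ⟨h₁, h₂, h₃⟩ | ⟨h₁, h₂, h₃⟩
  · exact Or.inl ⟨by dsimp only; omega, h₂, h₃⟩
  · exact Or.inr ⟨h₁, by dsimp only; omega, by dsimp only; omega⟩

lemma exists_serviceReplicas_of_mem_Repl_sol {q : Replica} (hq1 : 1 ≤ q.1) :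
    ∀ n ≤ S.N, q ∈ Repl (S.sol n) → ∃ m, 1 ≤ m ∧ m ≤ n ∧ q ∈ S.serviceReplicas m
  | 0, _, hq => by
    rw [S.sol_zero] at hq
    rcases hq with rfl | ⟨e, he, -⟩
    · exact absurd hq1 (by decide)
    · exact absurd he (Finset.notMem_empty e)
  | n + 1, hN, hq => by
    rw [S.step (n + 1) (by omega) hN] at hq
    rcases hq with rfl | ⟨e, he, hqe⟩
    · exact absurd hq1 (by decide)
    simp only [Nat.add_sub_cancel, Finset.mem_union] at he
    rcases he with (((he | he) | he) | he)
    · obtain ⟨m, hm1, hmn, hm⟩ := exists_serviceReplicas_of_mem_Repl_sol hq1 n (by omega)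
        (mem_Repl_of_mem_Repl_union_vertPath_zero (Or.inr ⟨e, Finset.mem_union.2 he, hqe⟩) hq1)
      exact ⟨m, hm1, by omega, hm⟩
    · obtain ⟨h₁, h₂, h₃⟩ := endpoint_of_mem_vertPath he hqe
      exact ⟨n + 1, by omega, le_rfl, Or.inr ⟨h₁, h₂, by omega⟩⟩
    · exact ⟨n + 1, by omega, le_rfl, Or.inl (endpoint_of_mem_horizPath he hqe)⟩
    · obtain ⟨h₁, h₂, h₃⟩ := endpoint_of_mem_vertPath he hqe
      obtain ⟨-, -, -, hst⟩ := S.serv_bounds (n := n + 1) (by omega) hN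
      exact ⟨n + 1, by omega, le_rfl, Or.inr ⟨h₁, by omega, h₃⟩⟩

lemma exists_serviceReplicas_of_mem_available {n : ℕ} (h1 : 1 ≤ n) (hN : n ≤ S.N) {q : Replica}
    (hq : q ∈ S.available n) (hq1 : 1 ≤ q.1) :
    ∃ m, 1 ≤ m ∧ m < n ∧ q ∈ S.serviceReplicas m := by
  obtain ⟨m, hm1, hmn, hm⟩ := S.exists_serviceReplicas_of_mem_Repl_sol hq1 (n - 1) (by omega)
    (mem_Repl_of_mem_Repl_union_vertPath_zero hq hq1)
  exact ⟨m, hm1, by omega, hm⟩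

lemma rho_le_of_mem_available {n a b : ℕ} (h1 : 1 ≤ n) (hN : n ≤ S.N)
    (hab : ((a, b) : Replica) ∈ S.available n) (ha : a ≤ S.v n) (hb : b ≤ S.t n) :
    S.ρ n ≤ S.v n - a ∨ S.ρ n ≤ S.t n - b := by
  have h := S.rho_min n h1 hN (a, b) hab
  rw [distInf, if_pos ⟨ha, hb⟩, Nat.cast_le] at h
  exact le_max_iff.1 h

lemma us_le_of_mem_available {n a b : ℕ} (h1 : 1 ≤ n) (hN : n ≤ S.N)
    (hab : ((a, b) : Replica) ∈ S.available n) (ha₁ : S.v n ≤ a + 5 * S.ρ n) (ha₂ : a ≤ S.v n)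
    (hb₁ : S.t n ≤ b + 5 * S.ρ n) (hb₂ : b ≤ S.t n) : S.us n ≤ a :=
  S.serv_min n h1 hN _ hab ⟨by dsimp only; omega, ha₂, by dsimp only; omega, hb₂⟩

lemma closest_of_uncovered {n : ℕ} (h1 : 1 ≤ n) (hN : n ≤ S.N) (hu : S.uncovered n) :
    S.us n ≤ S.u' n ∧ S.u' n ≤ S.v n ∧ S.v n < S.u' n + S.ρ n ∧ S.s' n + S.ρ n = S.t n := by
  have hd := S.closest_dist n h1 hN
  rw [distInf] at hd
  split_ifs at hd with hle
  · obtain ⟨hu', hs'⟩ := hle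
    rw [Nat.cast_inj] at hd
    have hus := S.us_le_of_mem_available h1 hN (S.closest_mem n h1 hN)
      (by dsimp only at hu' ⊢; omega) hu' (by dsimp only at hs' ⊢; omega) hs'
    have : ¬ S.ρ n ≤ S.v n - S.us n := hu
    refine ⟨hus, hu', by omega, ?_⟩
    rcases max_choice (S.v n - S.u' n) (S.t n - S.s' n) with h | h <;> omega
  · exact absurd hd (ENat.top_ne_natCast _)

lemma zero_t_mem_available {n : ℕ} (h1 : 1 ≤ n) (hN : n ≤ S.N) :
    ((0, S.t n) : Replica) ∈ S.available n := by
  induction n, h1 using Nat.le_induction with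
  | base =>
    refine mem_Repl_of_vertPath_subset Finset.subset_union_right ?_ (S.t_mono 0 1 (by omega) hN)
      le_rfl
    rw [Nat.sub_self, S.t_zero]
    exact Set.mem_insert _ _
  | succ n hn ih =>
    exact mem_Repl_of_vertPath_subset Finset.subset_union_right
      (Repl_mono Finset.subset_union_left
        (S.available_subset_Repl_sol hn (by omega) (ih (by omega))))
      (S.t_mono n (n + 1) (by omega) hN) le_rfl

lemma rho_le_v {n : ℕ} (h1 : 1 ≤ n) (hN : n ≤ S.N) : S.ρ n ≤ S.v n := by
  have := S.rho_le_of_mem_available h1 hN (S.zero_t_mem_available h1 hN) (Nat.zero_le _) le_rfl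
  omega

end

variable {S : SquareRun}

lemma exists_source_of_closest {i : ℕ} (h1 : 1 ≤ i) (hN : i ≤ S.N) (hu : S.uncovered i) :
    ∃ m, 1 ≤ m ∧ m < i ∧ S.t m + S.ρ i ≤ S.t i ∧
      ((S.u' i, S.s' i) : Replica) ∈ Repl (S.sol m) := by
  obtain ⟨hus, hu'v, hvu', hs'⟩ := S.closest_of_uncovered h1 hN hu
  have hρv := S.rho_le_v h1 hN
  obtain ⟨m, hm1, hmi, hm⟩ := S.exists_serviceReplicas_of_mem_available h1 hN
    (S.closest_mem i h1 hN) (by dsimp only; omega)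
  have hmN : m ≤ S.N := by omega
  have hserv := S.serv_bounds hm1 hmN
  have htm := S.t_mono m i hmi.le hN
  refine ⟨m, hm1, hmi, ?_, S.serviceReplicas_subset hm1 hmN hm⟩
  by_contra hlate
  have hnot_cov : ¬ S.ρ i ≤ S.v i - S.us i := hu
  -- the SQ5 trail of `m` ends within time distance `ρ i` of `r_i`, so its column is far from `v i`
  have htrail := S.Repl_sol_subset_available hmi hN <| S.serviceReplicas_subset hm1 hmN
    (show ((S.us m, min (S.t m + 4 * S.ρ m) (S.t i)) : Replica) ∈ S.serviceReplicas m from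
      Or.inr ⟨rfl, by omega, by omega⟩)
  have hfar : S.us m + S.ρ i ≤ S.v i := by
    have hum : S.us m ≤ S.u' i := by rcases hm with ⟨-, h, -⟩ | ⟨h, -⟩ <;> dsimp only at h <;> omega
    rcases S.rho_le_of_mem_available h1 hN htrail (by omega) (by omega) with h | h <;> omega
  obtain ⟨hrow_t, hrow_u, hrow_v⟩ : S.s' i = S.t m ∧ S.us m ≤ S.u' i ∧ S.u' i ≤ S.v m := by
    rcases hm with h | ⟨h, -⟩
    · exact h
    · dsimp only at h; omega
  -- hence the row of `m` crosses column `v i - ρ i`, which would make `r_i` covered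
  have hcross := S.Repl_sol_subset_available hmi hN <| S.serviceReplicas_subset hm1 hmN
    (show ((S.v i - S.ρ i, S.t m) : Replica) ∈ S.serviceReplicas m from
      Or.inl ⟨rfl, by dsimp only; omega, by dsimp only; omega⟩)
  have := S.us_le_of_mem_available h1 hN hcross (by omega) (by omega) (by omega) htm
  omega

namespace IsParent

variable {i j : ℕ} (hp : S.IsParent i j)
include hp

lemma t_le : S.t j ≤ S.t i := S.t_mono j i hp.2.1.le hp.2.2.1

lemma exists_common_replica : ∃ p : Replica, 1 ≤ p.1 + p.2 ∧
    p.1 ≤ S.v j ∧ p.2 ≤ S.t j ∧ p.1 ≤ S.v i ∧ p.2 ≤ S.t i ∧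
    S.v j - p.1 + (S.t j - p.2) < S.ρ j ∧ S.v i - p.1 + (S.t i - p.2) < S.ρ i :=
  not_ballsEdgeDisjoint_iff.1 hp.2.2.2.2.2.1

lemma t_lt_add : S.t i < S.t j + S.ρ i := by
  obtain ⟨p, -, -, hj, -, -, -, hi⟩ := hp.exists_common_replica
  omega

lemma v_lt_add : S.v j < S.v i + S.ρ j := by
  obtain ⟨p, -, -, -, hi, -, hj, -⟩ := hp.exists_common_replica
  omega

lemma v_lt_us : S.v i < S.us j := by
  have ⟨hj1, hji, hiN, _⟩ := hp
  obtain ⟨p, -, hpj, hpj', hpi, hpi', -, hclose⟩ := hp.exists_common_replica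
  have hserv := S.serv_bounds hj1 (by omega)
  by_contra hle
  -- the SQ4 row of `j` passes through column `min (v i) (v j)` at time `t j`, too close to `r_i`
  have hrow := S.Repl_sol_subset_available hji hiN <| S.serviceReplicas_subset hj1 (by omega)
    (show ((min (S.v i) (S.v j), S.t j) : Replica) ∈ S.serviceReplicas j from
      Or.inl ⟨rfl, by dsimp only; omega, by dsimp only; omega⟩)
  have := hp.t_le
  rcases S.rho_le_of_mem_available (by omega) hiN hrow (by omega) this with h | h <;> omega

lemma four_mul_rho_lt : 4 * S.ρ j < S.ρ i := by
  have ⟨hj1, hji, hiN, _, hiu, _⟩ := hp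
  obtain ⟨hus, hu'v, hvu', hs'⟩ := S.closest_of_uncovered (by omega) hiN hiu
  obtain ⟨m, hm1, hmi, hmt, hm⟩ := exists_source_of_closest (by omega) hiN hiu
  have hti := hp.t_lt_add
  have hvj := hp.v_lt_add
  have hvus := hp.v_lt_us
  have hserv := S.serv_bounds hj1 (by omega)
  have hmj : m < j := by
    by_contra h
    have := S.t_mono j m (by omega) (by omega)
    omega
  by_contra hbig
  -- the closest replica of `r_i` would lie in `Sq(r_j, 5 ρ j)`, left of the serving node of `j`
  have := S.us_le_of_mem_available hj1 (by omega) (S.Repl_sol_subset_available hmj (by omega) hm)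
    (by omega) (by omega) (by have := hp.t_le; omega) (by omega)
  omega

end IsParent

/-- Under these hypotheses the box `(v i, v k] × [t k' - 5 ρ k', t k - ρ k]` holds no replica:
following serving replicas backwards from one in the box leads either into `Sq(r_k', 5 ρ k')` left
of the serving node of `k'`, or to a row or trail of Square too close to `r_i` or `r_k`. -/
lemma not_mem_available_of_close_suns {i k' k : ℕ} (hp' : S.IsParent i k') (hp : S.IsParent i k)
    (hlt : k' < k) (hcol : S.v k < S.us k') (hclose : S.t k < S.t k' + 4 * S.ρ k' + S.ρ k) :
    ∀ n, 1 ≤ n → n ≤ k → ∀ a b, ((a, b) : Replica) ∈ S.available n →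
      S.v i < a → a ≤ S.v k → S.t k' ≤ b + 5 * S.ρ k' → b + S.ρ k ≤ S.t k → False := by
  have ⟨hk'1, hk'k, hiN, _⟩ := hp'
  have ⟨_, hki, _⟩ := hp
  have hv' := hp'.v_lt_add
  have ht' := hp'.t_lt_add
  have ht'i := hp'.t_le
  have hv := hp.v_lt_add
  have hserv' := S.serv_bounds hk'1 (by omega)
  intro n
  induction n using Nat.strong_induction_on with
  | _ n ih =>
  intro hn1 hnk a b hab hva hav hb₁ hb₂
  obtain ⟨m, hm1, hmn, hm⟩ := S.exists_serviceReplicas_of_mem_available hn1 (by omega) hab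
    (by dsimp only; omega)
  have hserv := S.serv_bounds hm1 (by omega)
  have htmk := S.t_mono m k (by omega) (by omega)
  rcases lt_or_ge m k' with hmk' | hk'm
  · -- created before `k'`: it would lie in `Sq(r_k', 5 ρ k')`, left of the serving node of `k'`
    have hmin := S.Repl_sol_subset_available hmk' (by omega) <|
      S.serviceReplicas_subset hm1 (by omega) <|
        S.mk_min_mem_serviceReplicas hm1 (by omega) hm (S.t_mono m k' hmk'.le (by omega))
    have := S.us_le_of_mem_available hk'1 (by omega) hmin (by omega) (by omega) (by omega)
      (by omega)
    omega
  have htk'm := S.t_mono k' m hk'm (by omega)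
  have hum : S.us m ≤ a ∧ a ≤ S.v m := by
    rcases hm with ⟨-, h₁, h₂⟩ | ⟨h, -⟩
    · exact ⟨h₁, h₂⟩
    · dsimp only at h; omega
  rcases le_or_gt (S.us m) (S.v i) with hleft | hright
  · -- the row of `m` crosses column `v i` within time distance `ρ i` of `r_i`
    have hrow_b : b = S.t m := by
      rcases hm with ⟨h, -⟩ | ⟨h, -⟩ <;> dsimp only at h <;> omega
    have hcross := S.Repl_sol_subset_available (by omega : m < i) hiN <|
      S.serviceReplicas_subset hm1 (by omega)
        (show ((S.v i, S.t m) : Replica) ∈ S.serviceReplicas m from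
          Or.inl ⟨rfl, by dsimp only; omega, by dsimp only; omega⟩)
    rcases S.rho_le_of_mem_available (by omega) hiN hcross le_rfl
      (S.t_mono m i (by omega) hiN) with h | h <;> omega
  rcases lt_or_ge (S.t k) (S.t m + 4 * S.ρ m + S.ρ k) with hlate | hearly
  · -- the SQ5 trail of `m` reaches within distance `ρ k` of `r_k`
    have htrail := S.Repl_sol_subset_available (by omega : m < k) (by omega) <|
      S.serviceReplicas_subset hm1 (by omega)
        (show ((S.us m, min (S.t m + 4 * S.ρ m) (S.t k)) : Replica) ∈ S.serviceReplicas m from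
          Or.inr ⟨rfl, by dsimp only; omega, by dsimp only; omega⟩)
    rcases S.rho_le_of_mem_available (by omega) (by omega) htrail (by omega) (by omega)
      with h | h <;> omega
  · -- otherwise `ρ m < ρ k'`, and the serving replica of `m` lies in the box as well
    exact ih m hmn hm1 (by omega) (S.us m) (S.ss m) (S.serv_mem m hm1 (by omega)).1 hright
      (by omega) (by omega) (by omega)

lemma IsParent.t_add_le_t_of_lt {i k' k : ℕ} (hp' : S.IsParent i k') (hp : S.IsParent i k)
    (hlt : k' < k) : S.t k' + 4 * S.ρ k' + S.ρ k ≤ S.t k := by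
  have ⟨hk'1, _, hiN, _, _, _, hminimal⟩ := hp'
  have ⟨hk1, hki, _, hku, _⟩ := hp
  have hv := hp.v_lt_add
  have hus' := hp'.v_lt_us
  have hus := hp.v_lt_us
  have hv' := hp'.v_lt_add
  have hserv' := S.serv_bounds hk'1 (by omega)
  have hserv := S.serv_bounds hk1 (by omega)
  have htk'k := S.t_mono k' k hlt.le (by omega)
  by_contra! hclose
  rcases le_or_gt (S.us k') (S.v k) with hleft | hright
  · -- the SQ5 trail of `k'` reaches within distance `ρ k` of `r_k`
    have htrail := S.Repl_sol_subset_available hlt (by omega) <|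
      S.serviceReplicas_subset hk'1 (by omega)
        (show ((S.us k', min (S.t k' + 4 * S.ρ k') (S.t k)) : Replica) ∈ S.serviceReplicas k' from
          Or.inr ⟨rfl, by dsimp only; omega, by dsimp only; omega⟩)
    rcases S.rho_le_of_mem_available hk1 (by omega) htrail hleft (by omega) with h | h <;> omega
  -- `SQball(k')` and `SQball(k)` would share the edge ending at `(v k, t k')`, against the choice
  -- of `i` as the parent of `k'`
  have hgap : S.t k' + S.ρ k ≤ S.t k := by
    by_contra! h
    refine not_ballsEdgeDisjoint_iff.2 ⟨(S.v k, S.t k'), ?_⟩ (hminimal k hlt hki hku)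
    simp only [req]
    omega
  obtain ⟨hus_k, hu'v, -, hs'⟩ := S.closest_of_uncovered hk1 (by omega) hku
  exact not_mem_available_of_close_suns hp' hp hlt hright hclose k hk1 le_rfl _ _
    (S.closest_mem k hk1 (by omega)) (by omega) hu'v (by omega) (by omega)

end SquareRun

theorem parent_radius_ge_children_general (S : SquareRun) (i : ℕ)
    (suns : Finset ℕ) (hsuns : ∀ j, j ∈ suns ↔ S.IsParent i j)
    (hne : suns.Nonempty) :
    2 * ∑ j ∈ suns, S.ρ j ≤ S.ρ i := by
  have hlo : ∀ j ∈ suns, S.t i + 1 - S.ρ i ≤ S.t j := fun j hj => by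
    have := ((hsuns j).1 hj).t_lt_add
    omega
  have hhi : ∀ j ∈ suns, S.t j + 4 * S.ρ j ≤ S.t i + S.ρ i - 1 := fun j hj => by
    have := ((hsuns j).1 hj).t_le
    have := ((hsuns j).1 hj).four_mul_rho_lt
    omega
  have hchain : ∀ a ∈ suns, ∀ b ∈ suns, a < b → S.t a + 4 * S.ρ a ≤ S.t b :=
    fun a ha b hb hab => by
    have := ((hsuns a).1 ha).t_add_le_t_of_lt ((hsuns b).1 hb) hab
    omega
  have := Finset.add_sum_le_of_chain suns S.t (fun j => 4 * S.ρ j) hne hlo hhi hchain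
  rw [← Finset.mul_sum] at this
  omega

/-- The radius of an uncovered parent is at least twice the sum of the radii of
its children: `ρ(i) ≥ 2·Σ_{j∈suns(i)} ρ(j)`. -/
theorem parent_radius_ge_children (S : SquareRun) (i : ℕ)
    (hi1 : 1 ≤ i) (hiN : i ≤ S.N) (hu : S.uncovered i)
    (suns : Finset ℕ) (hsuns : ∀ j, j ∈ suns ↔ S.IsParent i j)
    (hne : suns.Nonempty) :
    2 * ∑ j ∈ suns, S.ρ j ≤ S.ρ i :=
  parent_radius_ge_children_general S i suns hsuns hne
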